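/- Let K ≥ 1, j ∈ [K], and let z, z̄ ∈ [0,∞)^K satisfy ∑_{i∈[K]} z_i = 1, ∑_{i∈[K]} z̄_i ≤ 1, and z̄_i ≥ z_i for all i ∈ [K] with i ≠ j. Then ∑_{i∈[K]} z̄_i^{4/3} ≤ 2·∑_{i∈[K]} z_i^{4/3}. -/

import Mathlib

/-! For `i ≠ j` write `z̄ i = z i + d i` with `d i ≥ 0`. Convexity of `t ↦ t ^ p` gives
`(z i + d i) ^ p ≤ 2 ^ (p - 1) * (z i ^ p + d i ^ p)`. Since the total mass does not grow, the excess
`D = ∑ d i` satisfies `z̄ j + D ≤ z j`, so superadditivity of `t ↦ t ^ p` absorbs the head term and all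
the `d i ^ p` into `z j ^ p`. For `p = 4/3` the resulting constant is `2 ^ (1/3) ≤ 2`. -/

open Finset

namespace Real

lemma rpow_add_le_mul_rpow_add_rpow {p a b : ℝ} (ha : 0 ≤ a) (hb : 0 ≤ b) (hp : 1 ≤ p) :
    (a + b) ^ p ≤ 2 ^ (p - 1) * (a ^ p + b ^ p) := by
  lift a to NNReal using ha
  lift b to NNReal using hb
  exact_mod_cast NNReal.rpow_add_le_mul_rpow_add_rpow a b hp

variable {ι : Type*} {s : Finset ι} {p : ℝ}

lemma sum_rpow_le_rpow_sum {f : ι → ℝ} (hf : ∀ i ∈ s, 0 ≤ f i) (hp : 1 ≤ p) :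
    ∑ i ∈ s, f i ^ p ≤ (∑ i ∈ s, f i) ^ p := by
  induction s using Finset.cons_induction with
  | empty => simp [zero_rpow (by linarith : p ≠ 0)]
  | cons a s ha ih =>
    have hfs : ∀ i ∈ s, 0 ≤ f i := fun i hi => hf i (mem_cons_of_mem hi)
    rw [sum_cons, sum_cons]
    calc f a ^ p + ∑ i ∈ s, f i ^ p ≤ f a ^ p + (∑ i ∈ s, f i) ^ p := by gcongr; exact ih hfs
      _ ≤ (f a + ∑ i ∈ s, f i) ^ p :=
        add_rpow_le_rpow_add (hf a (mem_cons_self a s)) (sum_nonneg hfs) hp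

lemma sum_add_rpow_le {f g : ι → ℝ} (hf : ∀ i ∈ s, 0 ≤ f i) (hg : ∀ i ∈ s, 0 ≤ g i)
    (hp : 1 ≤ p) :
    ∑ i ∈ s, (f i + g i) ^ p ≤ 2 ^ (p - 1) * (∑ i ∈ s, f i ^ p + (∑ i ∈ s, g i) ^ p) :=
  calc ∑ i ∈ s, (f i + g i) ^ p ≤ ∑ i ∈ s, 2 ^ (p - 1) * (f i ^ p + g i ^ p) :=
        sum_le_sum fun i hi => rpow_add_le_mul_rpow_add_rpow (hf i hi) (hg i hi) hp
    _ = 2 ^ (p - 1) * (∑ i ∈ s, f i ^ p + ∑ i ∈ s, g i ^ p) := by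
        rw [← mul_sum, sum_add_distrib]
    _ ≤ 2 ^ (p - 1) * (∑ i ∈ s, f i ^ p + (∑ i ∈ s, g i) ^ p) := by
        gcongr; exact sum_rpow_le_rpow_sum hg hp

theorem sum_rpow_le_two_rpow_mul_sum_rpow_of_le_of_ne [Fintype ι] [DecidableEq ι] {z w : ι → ℝ}
    (j : ι) (hz : ∀ i, 0 ≤ z i) (hwj : 0 ≤ w j) (hsum : ∑ i, w i ≤ ∑ i, z i)
    (hdom : ∀ i, i ≠ j → z i ≤ w i) (hp : 1 ≤ p) :
    ∑ i, w i ^ p ≤ 2 ^ (p - 1) * ∑ i, z i ^ p := by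
  set E := univ.erase j
  set D := ∑ i ∈ E, (w i - z i)
  have hd : ∀ i ∈ E, 0 ≤ w i - z i := fun i hi => sub_nonneg.2 (hdom i (ne_of_mem_erase hi))
  have hD : w j + D ≤ z j := by
    rw [← add_sum_erase _ _ (mem_univ j), ← add_sum_erase _ _ (mem_univ j)] at hsum
    simp only [D, sum_sub_distrib]
    linarith
  have hhead : w j ^ p + D ^ p ≤ z j ^ p :=
    (add_rpow_le_rpow_add hwj (sum_nonneg hd) hp).trans
      (rpow_le_rpow (add_nonneg hwj (sum_nonneg hd)) hD (by linarith))
  have htail : ∑ i ∈ E, w i ^ p ≤ 2 ^ (p - 1) * (∑ i ∈ E, z i ^ p + D ^ p) := by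
    simpa only [add_sub_cancel] using sum_add_rpow_le (fun i _ => hz i) hd hp
  have hconst : 1 ≤ (2 : ℝ) ^ (p - 1) := one_le_rpow (by norm_num) (by linarith)
  rw [← add_sum_erase _ _ (mem_univ j), ← add_sum_erase _ _ (mem_univ j)]
  calc w j ^ p + ∑ i ∈ E, w i ^ p
      ≤ 2 ^ (p - 1) * w j ^ p + 2 ^ (p - 1) * (∑ i ∈ E, z i ^ p + D ^ p) := by
        gcongr
        exact le_mul_of_one_le_left (rpow_nonneg hwj p) hconst
    _ = 2 ^ (p - 1) * ((w j ^ p + D ^ p) + ∑ i ∈ E, z i ^ p) := by ring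
    _ ≤ 2 ^ (p - 1) * (z j ^ p + ∑ i ∈ E, z i ^ p) := by gcongr

end Real

theorem power_sum_domination_general
    (K : ℕ) (j : Fin K)
    (z zbar : Fin K → ℝ) (hz : ∀ i, 0 ≤ z i) (hzbar : ∀ i, 0 ≤ zbar i)
    (hzsum : ∑ i, z i = 1) (hzbarsum : ∑ i, zbar i ≤ 1)
    (hdom : ∀ i, i ≠ j → z i ≤ zbar i) :
    ∑ i, (zbar i) ^ ((4 : ℝ) / 3) ≤ 2 * ∑ i, (z i) ^ ((4 : ℝ) / 3) := by
  have hbound := Real.sum_rpow_le_two_rpow_mul_sum_rpow_of_le_of_ne j hz (hzbar j)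
    (hzbarsum.trans hzsum.ge) hdom (by norm_num : (1 : ℝ) ≤ 4 / 3)
  have hconst : (2 : ℝ) ^ ((4 : ℝ) / 3 - 1) ≤ 2 :=
    Real.rpow_le_self_of_one_le (by norm_num) (by norm_num)
  calc ∑ i, zbar i ^ ((4 : ℝ) / 3) ≤ 2 ^ ((4 : ℝ) / 3 - 1) * ∑ i, z i ^ ((4 : ℝ) / 3) := hbound
    _ ≤ 2 * ∑ i, z i ^ ((4 : ℝ) / 3) :=
      mul_le_mul_of_nonneg_right hconst (sum_nonneg fun i _ => Real.rpow_nonneg (hz i) _)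

/-- The 4/3-power version of Lemma 28 of Ito (2021). -/
theorem power_sum_domination
    (K : ℕ) (hK : 1 ≤ K) (j : Fin K)
    (z zbar : Fin K → ℝ) (hz : ∀ i, 0 ≤ z i) (hzbar : ∀ i, 0 ≤ zbar i)
    (hzsum : ∑ i, z i = 1) (hzbarsum : ∑ i, zbar i ≤ 1)
    (hdom : ∀ i, i ≠ j → z i ≤ zbar i) :
    ∑ i, (zbar i) ^ ((4 : ℝ) / 3) ≤ 2 * ∑ i, (z i) ^ ((4 : ℝ) / 3) :=
  power_sum_domination_general K j z zbar hz hzbar hzsum hzbarsum hdom
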